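/- Let F be a finite family of sets that is hitting-t-degenerate, and suppose that every subfamily F' ⊆ F with packing number ν(F') = 1 satisfies τ(F') ≤ t₀. Then τ(F) ≤ t₀ + t·(ν(F) − 1). -/

import Mathlib

open Classical MeasureTheory
noncomputable section

/-- Points of the Euclidean plane. -/
abbrev Pt := EuclideanSpace ℝ (Fin 2)

/-- A finite point set `H` hits every member of the family `F`. -/
def Hits (H : Finset Pt) (F : Finset (Set Pt)) : Prop := ∀ S ∈ F, ∃ p ∈ H, p ∈ S

/-- The hitting number τ of a family. -/
def hitNum (F : Finset (Set Pt)) : ℕ := sInf {n | ∃ H : Finset Pt, H.card = n ∧ Hits H F}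

/-- The packing number ν of a family. -/
def packNum (F : Finset (Set Pt)) : ℕ :=
  sSup {n | ∃ P ⊆ F, P.card = n ∧ (P : Set (Set Pt)).Pairwise Disjoint}

/-- The maximum degree Δ of a family: the maximum number of members containing a common point. -/
def maxDeg (F : Finset (Set Pt)) : ℕ :=
  sSup {n | ∃ p : Pt, (F.filter fun S => p ∈ S).card = n}

/-- The chromatic number χ of the intersection graph of a family. -/
def chromNum (F : Finset (Set Pt)) : ℕ :=
  sInf {n | ∃ col : Set Pt → ℕ, (∀ S ∈ F, col S < n) ∧
    ∀ S ∈ F, ∀ T ∈ F, S ≠ T → (S ∩ T).Nonempty → col S ≠ col T}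

/-- Hitting-`t`-degeneracy: every nonempty subfamily has a member whose closed
neighbourhood within the subfamily can be hit by at most `t` points. -/
def HitDeg (t : ℕ) (F : Finset (Set Pt)) : Prop :=
  ∀ F' ⊆ F, F'.Nonempty → ∃ S ∈ F',
    hitNum (F'.filter fun T => (T ∩ S).Nonempty) ≤ t

/-- `D`-degeneracy of a family: every nonempty subfamily has a member intersecting
at most `D` other members of the subfamily. -/
def FamDeg (D : ℕ) (F : Finset (Set Pt)) : Prop :=
  ∀ F' ⊆ F, F'.Nonempty → ∃ S ∈ F',
    (F'.filter fun T => T ≠ S ∧ (T ∩ S).Nonempty).card ≤ D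

/-! Remove a member `S` given by hitting-degeneracy: its closed neighbourhood costs at most `t`
points, and the members disjoint from `S` form a smaller family whose packing number is at least
one less, since `S` extends any packing of it. Induct on the family, the base case `ν = 1` being
the hypothesis on `t₀`. -/

lemma hitNum_le_card {H : Finset Pt} {F : Finset (Set Pt)} (hH : Hits H F) :
    hitNum F ≤ H.card :=
  Nat.sInf_le ⟨H, rfl, hH⟩

lemma Hits.mono {H : Finset Pt} {F G : Finset (Set Pt)} (hH : Hits H F) (hGF : G ⊆ F) :
    Hits H G :=
  fun S hS => hH S (hGF hS)

lemma hitNum_empty : hitNum ∅ = 0 :=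
  Nat.le_zero.mp (hitNum_le_card (H := ∅) fun _ hS => absurd hS (Finset.notMem_empty _))

-- The junk value `sInf ∅ = 0`.
lemma hitNum_eq_zero_of_forall_not_hits {F : Finset (Set Pt)} (hF : ∀ H, ¬Hits H F) :
    hitNum F = 0 := by
  rw [hitNum, Nat.sInf_eq_zero]
  exact Or.inr (Set.eq_empty_of_forall_notMem fun _ ⟨H, _, hH⟩ => hF H hH)

lemma hitNum_eq_zero_of_empty_mem {F : Finset (Set Pt)} (hF : ∅ ∈ F) : hitNum F = 0 :=
  hitNum_eq_zero_of_forall_not_hits fun H hH => by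
    obtain ⟨p, -, hp⟩ := hH ∅ hF
    exact hp

lemma exists_hits_card_eq_hitNum {F : Finset (Set Pt)} (hF : ∃ H, Hits H F) :
    ∃ H, H.card = hitNum F ∧ Hits H F :=
  let ⟨H, hH⟩ := hF
  Nat.sInf_mem (s := {n | ∃ H : Finset Pt, H.card = n ∧ Hits H F}) ⟨H.card, H, rfl, hH⟩

lemma hitNum_union_le (A B : Finset (Set Pt)) : hitNum (A ∪ B) ≤ hitNum A + hitNum B := by
  by_cases hAB : ∃ H, Hits H (A ∪ B)
  · obtain ⟨HA, hHA, hA⟩ :=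
      exists_hits_card_eq_hitNum (hAB.imp fun _ hH => hH.mono Finset.subset_union_left)
    obtain ⟨HB, hHB, hB⟩ :=
      exists_hits_card_eq_hitNum (hAB.imp fun _ hH => hH.mono Finset.subset_union_right)
    have hunion : Hits (HA ∪ HB) (A ∪ B) := by
      intro S hS
      rcases Finset.mem_union.mp hS with hS | hS
      · obtain ⟨p, hp, hpS⟩ := hA S hS
        exact ⟨p, Finset.mem_union_left _ hp, hpS⟩
      · obtain ⟨p, hp, hpS⟩ := hB S hS
        exact ⟨p, Finset.mem_union_right _ hp, hpS⟩
    calc hitNum (A ∪ B) ≤ (HA ∪ HB).card := hitNum_le_card hunion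
      _ ≤ HA.card + HB.card := Finset.card_union_le _ _
      _ = hitNum A + hitNum B := by rw [hHA, hHB]
  · rw [hitNum_eq_zero_of_forall_not_hits fun H hH => hAB ⟨H, hH⟩]
    exact Nat.zero_le _

lemma hitNum_le_add_filter (F : Finset (Set Pt)) (p : Set Pt → Prop) [DecidablePred p] :
    hitNum F ≤ hitNum (F.filter p) + hitNum (F.filter fun S => ¬p S) := by
  conv_lhs => rw [← Finset.filter_union_filter_not_eq p F]
  exact hitNum_union_le _ _

lemma packNum_bddAbove (F : Finset (Set Pt)) :
    BddAbove {n | ∃ P ⊆ F, P.card = n ∧ (P : Set (Set Pt)).Pairwise Disjoint} :=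
  ⟨F.card, fun _ ⟨_, hPF, hP, _⟩ => hP ▸ Finset.card_le_card hPF⟩

lemma card_le_packNum {F P : Finset (Set Pt)} (hPF : P ⊆ F)
    (hP : (P : Set (Set Pt)).Pairwise Disjoint) : P.card ≤ packNum F :=
  le_csSup (packNum_bddAbove F) ⟨P, hPF, rfl, hP⟩

lemma exists_packing_card_eq_packNum (F : Finset (Set Pt)) :
    ∃ P ⊆ F, P.card = packNum F ∧ (P : Set (Set Pt)).Pairwise Disjoint :=
  Nat.sSup_mem (s := {n | ∃ P ⊆ F, P.card = n ∧ (P : Set (Set Pt)).Pairwise Disjoint})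
    ⟨0, ∅, Finset.empty_subset _, rfl, by simp⟩ (packNum_bddAbove F)

lemma one_le_packNum {F : Finset (Set Pt)} (hF : F.Nonempty) : 1 ≤ packNum F := by
  obtain ⟨S, hS⟩ := hF
  simpa using card_le_packNum (Finset.singleton_subset_iff.mpr hS) (by simp)

lemma packNum_filter_disjoint_add_one_le {F : Finset (Set Pt)} {S : Set Pt} (hSF : S ∈ F)
    (hS : S.Nonempty) :
    packNum (F.filter fun T => ¬(T ∩ S).Nonempty) + 1 ≤ packNum F := by
  obtain ⟨P, hPF, hPcard, hP⟩ := exists_packing_card_eq_packNum (F.filter fun T => ¬(T ∩ S).Nonempty)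
  have hdisj : ∀ T ∈ P, Disjoint T S := fun T hT =>
    Set.disjoint_iff_inter_eq_empty.mpr
      (Set.not_nonempty_iff_eq_empty.mp (Finset.mem_filter.mp (hPF hT)).2)
  have hSP : S ∉ P := fun hSP => hS.ne_empty (disjoint_self.mp (hdisj S hSP))
  have hinsert : (insert S P : Finset (Set Pt)) ⊆ F :=
    Finset.insert_subset hSF (hPF.trans (Finset.filter_subset _ _))
  have hpacking : ((insert S P : Finset (Set Pt)) : Set (Set Pt)).Pairwise Disjoint := by
    rw [Finset.coe_insert, Set.pairwise_insert_of_symm]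
    exact ⟨hP, fun T hT _ => (hdisj T hT).symm⟩
  simpa [Finset.card_insert_of_notMem hSP, hPcard] using card_le_packNum hinsert hpacking

lemma HitDeg.mono {t : ℕ} {F G : Finset (Set Pt)} (hF : HitDeg t F) (hGF : G ⊆ F) :
    HitDeg t G :=
  fun F' hF' => hF F' (hF'.trans hGF)

theorem stmt_1 (t t₀ : ℕ) (F : Finset (Set Pt)) (h : HitDeg t F)
    (h0 : ∀ F' ⊆ F, packNum F' = 1 → hitNum F' ≤ t₀) :
    hitNum F ≤ t₀ + t * (packNum F - 1) := by
  induction F using Finset.strongInduction with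
  | H F ih =>
  rcases F.eq_empty_or_nonempty with rfl | hF
  · simp [hitNum_empty]
  rcases (one_le_packNum hF).eq_or_lt with hν | hν
  · exact (h0 F subset_rfl hν.symm).trans (Nat.le_add_right _ _)
  obtain ⟨S, hSF, hSt⟩ := h F subset_rfl hF
  rcases S.eq_empty_or_nonempty with rfl | hS
  · simp [hitNum_eq_zero_of_empty_mem hSF]
  set F₂ := F.filter fun T => ¬(T ∩ S).Nonempty
  have hF₂F : F₂ ⊂ F :=
    (Finset.ssubset_iff_of_subset (Finset.filter_subset _ _)).mpr ⟨S, hSF, by simp [hS]⟩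
  have hν₂ : packNum F₂ + 1 ≤ packNum F := packNum_filter_disjoint_add_one_le hSF hS
  have ih₂ := ih F₂ hF₂F (h.mono hF₂F.subset) fun G hG => h0 G (hG.trans hF₂F.subset)
  have hmul : t * (1 + (packNum F₂ - 1)) ≤ t * (packNum F - 1) :=
    Nat.mul_le_mul_left t (by omega)
  calc hitNum F ≤ hitNum (F.filter fun T => (T ∩ S).Nonempty) + hitNum F₂ :=
        hitNum_le_add_filter F _
    _ ≤ t + (t₀ + t * (packNum F₂ - 1)) := add_le_add hSt ih₂
    _ ≤ t₀ + t * (packNum F - 1) := by rw [mul_add] at hmul; omega
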